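/- If two elements of C_M are comparable (one a prefix of the other), then both are of the form τγ^k. If two distinct elements of C_{M'} are comparable, then one is κα^kκγ and the other is κα^kκγγ for the same k. -/
import Mathlib


/-- The word `τ γ^k`. -/
def tgWord {N : ℕ} (τ γ : Fin N) (k : ℕ) : List (Fin N) :=
  τ :: List.replicate k γ

/-- The word `κ α^k κ γ`. -/
def kakWord {N : ℕ} (κ α γ : Fin N) (k : ℕ) : List (Fin N) :=
  κ :: (List.replicate k α ++ [κ, γ])

/-- `C_M = {τγ^k : k ≥ 2} ∪ {κα^kκγ : k ≥ 0}`. -/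
def CM {N : ℕ} (τ κ α γ : Fin N) : Set (List (Fin N)) :=
  {w | ∃ k, 2 ≤ k ∧ w = tgWord τ γ k} ∪ {w | ∃ k, w = kakWord κ α γ k}

/-- `C_{M'} = {κα^kκγ : k ≥ 0} ∪ {κα^kκγγ : k ≥ 0} ∪ {τγγ}`. -/
def CM' {N : ℕ} (τ κ α γ : Fin N) : Set (List (Fin N)) :=
  {w | ∃ k, w = kakWord κ α γ k} ∪ {w | ∃ k, w = kakWord κ α γ k ++ [γ]} ∪
    {tgWord τ γ 2}

/-- The finite word `w` is a prefix of the infinite sequence `y`. -/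
def PrefOf {N : ℕ} (w : List (Fin N)) (y : ℕ → Fin N) : Prop :=
  ∀ i, ∀ h : i < w.length, w.get ⟨i, h⟩ = y i

/-- The sequence `x` belongs to `Ω = {ω κ^∞ : ω ∈ Σ^*}`: it is eventually
equal to `κ`. -/
def InOmega {N : ℕ} (κ : Fin N) (x : ℕ → Fin N) : Prop :=
  ∃ n, ∀ i, n ≤ i → x i = κ

/-- `X` is the greedy decomposition of the infinite sequence `x` into
segments from `C ∪ Σ`: `x = X₀X₁X₂⋯` where each `X j` is the longest prefix
of the remaining tail belonging to `C ∪ Σ` (single letters count as words of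
length 1). -/
def IsDecompOf {N : ℕ} (C : Set (List (Fin N))) (x : ℕ → Fin N)
    (X : ℕ → List (Fin N)) : Prop :=
  ∀ j,
    PrefOf (X j) (fun i => x ((∑ t ∈ Finset.range j, (X t).length) + i)) ∧
    (X j ∈ C ∨ (X j).length = 1) ∧
    ∀ W : List (Fin N), (W ∈ C ∨ W.length = 1) →
      PrefOf W (fun i => x ((∑ t ∈ Finset.range j, (X t).length) + i)) →
      W.length ≤ (X j).length

section Aux

variable {N : ℕ} {τ κ α γ : Fin N}

lemma comp_get {u v : List (Fin N)} (h : u <+: v ∨ v <+: u) {i : ℕ}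
    (h1 : i < u.length) (h2 : i < v.length) : u[i]? = v[i]? := by
  rcases h with ⟨t, rfl⟩ | ⟨t, rfl⟩
  · rw [List.getElem?_append, if_pos h1]
  · rw [List.getElem?_append, if_pos h2]

lemma kak_len (k : ℕ) : (kakWord κ α γ k).length = k + 3 := by
  simp [kakWord]

lemma kakg_len (k : ℕ) : (kakWord κ α γ k ++ [γ]).length = k + 4 := by
  simp [kakWord]

lemma kakg_get (k i : ℕ) (h : i < k + 3) :
    (kakWord κ α γ k ++ [γ])[i]? = (kakWord κ α γ k)[i]? := by
  rw [List.getElem?_append, if_pos (by rw [kak_len]; exact h)]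

lemma kak_succ (k i : ℕ) (h : i < k) : (kakWord κ α γ k)[i+1]? = some α := by
  simp only [kakWord, List.getElem?_cons_succ]
  rw [List.getElem?_append, if_pos (by simpa)]
  simp [h]

lemma kak_k1 (k : ℕ) : (kakWord κ α γ k)[k+1]? = some κ := by
  simp only [kakWord, List.getElem?_cons_succ]
  rw [List.getElem?_append, if_neg (by simp)]
  simp

lemma kak_zero (k : ℕ) : (kakWord κ α γ k)[0]? = some κ := by
  simp [kakWord]

lemma tg_zero (k : ℕ) : (tgWord τ γ k)[0]? = some τ := by
  simp [tgWord]

/-- Two `κα^·κγ(γ)`-type words with different parameters are incomparable. -/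
lemma key (h3 : κ ≠ α) {k m : ℕ} (hkm : k < m) {u v : List (Fin N)}
    (hu : u = kakWord κ α γ k ∨ u = kakWord κ α γ k ++ [γ])
    (hv : v = kakWord κ α γ m ∨ v = kakWord κ α γ m ++ [γ])
    (hc : u <+: v ∨ v <+: u) : False := by
  have hu1 : u[k+1]? = some κ := by
    rcases hu with rfl | rfl
    · exact kak_k1 k
    · rw [kakg_get k (k+1) (by omega)]; exact kak_k1 k
  have hv1 : v[k+1]? = some α := by
    rcases hv with rfl | rfl
    · exact kak_succ m k hkm
    · rw [kakg_get m (k+1) (by omega)]; exact kak_succ m k hkm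
  have hul : k + 1 < u.length := by
    rcases hu with rfl | rfl
    · rw [kak_len]; omega
    · rw [kakg_len]; omega
  have hvl : k + 1 < v.length := by
    rcases hv with rfl | rfl
    · rw [kak_len]; omega
    · rw [kakg_len]; omega
  have := comp_get hc hul hvl
  rw [hu1, hv1] at this
  exact h3 (Option.some.inj this)

/-- A `τγ^·` word is incomparable with any `κα^·κγ(γ)`-type word. -/
lemma keyT (h1 : τ ≠ κ) {n j : ℕ} {v : List (Fin N)}
    (hv : v = kakWord κ α γ j ∨ v = kakWord κ α γ j ++ [γ])
    (hc : tgWord τ γ n <+: v ∨ v <+: tgWord τ γ n) : False := by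
  have hv0 : v[0]? = some κ := by
    rcases hv with rfl | rfl
    · exact kak_zero j
    · rw [kakg_get j 0 (by omega)]; exact kak_zero j
  have hvl : 0 < v.length := by
    rcases hv with rfl | rfl
    · rw [kak_len]; omega
    · rw [kakg_len]; omega
  have := comp_get hc (by simp [tgWord]) hvl
  rw [tg_zero, hv0] at this
  exact h1 (Option.some.inj this)

lemma kak_inj {k m : ℕ} (h : (kakWord κ α γ k : List (Fin N)) = kakWord κ α γ m) :
    k = m := by
  have := congrArg List.length h
  rw [kak_len, kak_len] at this
  omega

lemma kakg_inj {k m : ℕ}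
    (h : (kakWord κ α γ k ++ [γ] : List (Fin N)) = kakWord κ α γ m ++ [γ]) :
    k = m := by
  have := congrArg List.length h
  rw [kakg_len, kakg_len] at this
  omega

end Aux

/-- if two distinct elements of `C_M` are comparable, both are
of the form `τγ^k`; if two distinct elements of `C_{M'}` are comparable, then
one is `κα^kκγ` and the other is `κα^kκγγ` for the same `k`. -/
theorem stmt18 {N : ℕ} (hN : 4 ≤ N) (τ κ α γ : Fin N)
    (h1 : τ ≠ κ) (h2 : τ ≠ γ) (h3 : κ ≠ α) (h4 : κ ≠ γ) (h5 : α ≠ γ) :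
    (∀ w₁ w₂ : List (Fin N), w₁ ∈ CM τ κ α γ → w₂ ∈ CM τ κ α γ → w₁ ≠ w₂ →
      (w₁ <+: w₂ ∨ w₂ <+: w₁) →
      (∃ k, 2 ≤ k ∧ w₁ = tgWord τ γ k) ∧ (∃ k, 2 ≤ k ∧ w₂ = tgWord τ γ k)) ∧
    (∀ w₁ w₂ : List (Fin N), w₁ ∈ CM' τ κ α γ → w₂ ∈ CM' τ κ α γ → w₁ ≠ w₂ →
      (w₁ <+: w₂ ∨ w₂ <+: w₁) →
      ∃ k, (w₁ = kakWord κ α γ k ∧ w₂ = kakWord κ α γ k ++ [γ]) ∨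
        (w₂ = kakWord κ α γ k ∧ w₁ = kakWord κ α γ k ++ [γ])) := by
  constructor
  · intro w₁ w₂ hw₁ hw₂ hne hc
    simp only [CM, Set.mem_union, Set.mem_setOf_eq] at hw₁ hw₂
    rcases hw₁ with ⟨k, hk, rfl⟩ | ⟨k, rfl⟩ <;>
      rcases hw₂ with ⟨m, hm, rfl⟩ | ⟨m, rfl⟩
    · exact ⟨⟨k, hk, rfl⟩, ⟨m, hm, rfl⟩⟩
    · exact absurd hc (fun hc => keyT h1 (Or.inl rfl) hc)
    · exact absurd hc.symm (fun hc => keyT h1 (Or.inl rfl) hc)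
    · rcases lt_trichotomy k m with h | h | h
      · exact absurd hc (fun hc => key h3 h (Or.inl rfl) (Or.inl rfl) hc)
      · exact absurd (congrArg (kakWord κ α γ) h) hne
      · exact absurd hc.symm (fun hc => key h3 h (Or.inl rfl) (Or.inl rfl) hc)
  · intro w₁ w₂ hw₁ hw₂ hne hc
    simp only [CM', Set.mem_union, Set.mem_setOf_eq, Set.mem_singleton_iff] at hw₁ hw₂
    rcases hw₁ with (⟨k, rfl⟩ | ⟨k, rfl⟩) | rfl <;>
      rcases hw₂ with (⟨m, rfl⟩ | ⟨m, rfl⟩) | rfl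
    · rcases lt_trichotomy k m with h | h | h
      · exact absurd hc (fun hc => key h3 h (Or.inl rfl) (Or.inl rfl) hc)
      · exact absurd (congrArg (kakWord κ α γ) h) hne
      · exact absurd hc.symm (fun hc => key h3 h (Or.inl rfl) (Or.inl rfl) hc)
    · rcases lt_trichotomy k m with h | h | h
      · exact absurd hc (fun hc => key h3 h (Or.inl rfl) (Or.inr rfl) hc)
      · subst h; exact ⟨k, Or.inl ⟨rfl, rfl⟩⟩
      · exact absurd hc.symm (fun hc => key h3 h (Or.inr rfl) (Or.inl rfl) hc)
    · exact absurd hc.symm (fun hc => keyT h1 (Or.inl rfl) hc)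
    · rcases lt_trichotomy k m with h | h | h
      · exact absurd hc (fun hc => key h3 h (Or.inr rfl) (Or.inl rfl) hc)
      · subst h; exact ⟨k, Or.inr ⟨rfl, rfl⟩⟩
      · exact absurd hc.symm (fun hc => key h3 h (Or.inl rfl) (Or.inr rfl) hc)
    · rcases lt_trichotomy k m with h | h | h
      · exact absurd hc (fun hc => key h3 h (Or.inr rfl) (Or.inr rfl) hc)
      · exact absurd (congrArg (fun j => kakWord κ α γ j ++ [γ]) h) hne
      · exact absurd hc.symm (fun hc => key h3 h (Or.inr rfl) (Or.inr rfl) hc)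
    · exact absurd hc.symm (fun hc => keyT h1 (Or.inr rfl) hc)
    · exact absurd hc (fun hc => keyT h1 (Or.inl rfl) hc)
    · exact absurd hc (fun hc => keyT h1 (Or.inr rfl) hc)
    · exact absurd rfl hne
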